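/- Symmetric erasure mechanism is optimal: Let (X1,X2) ~ DSBS(p) and Y1 = X1 xor Z1 with Z1 ~ Ber(p) independent of X1, with X1 uniform on {0,1}. Consider mechanisms P_{U1|X1} of erasure type with parameters alpha_0, alpha_1 in [0,1]: P(U1=e|X1=0)=alpha_0, P(U1=0|X1=0)=1-alpha_0, P(U1=e|X1=1)=alpha_1, P(U1=1|X1=1)=1-alpha_1, subject to the distortion constraint (alpha_0 + alpha_1)/2 <= D1. Then H(Y1 | U1, X2), as a function of (alpha_0, alpha_1), is concave, symmetric under swapping alpha_0 and alpha_1, and is maximized subject to the constraint at alpha_0 = alpha_1; consequently the same conditional distribution P_{U1|X1} that minimizes the Wyner-Ziv rate I(X1; U1 | X2) also minimizes the leakage I(Y1; U1, X2). -/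

import Mathlib

open scoped BigOperators ENNReal

noncomputable section

/-- A probability mass function on a finite type. -/
def IsPMF {α : Type*} [Fintype α] (p : α → ℝ) : Prop :=
  (∀ a, 0 ≤ p a) ∧ ∑ a, p a = 1

/-- Shannon entropy in bits (logarithm base 2). -/
def Hent2 {α : Type*} [Fintype α] (p : α → ℝ) : ℝ :=
  ∑ a, -(p a * Real.logb 2 (p a))

open Classical in
/-- Distribution (pushforward) of a random variable `f` under a joint pmf `q`. -/
def pushf {Ω α : Type*} [Fintype Ω] (q : Ω → ℝ) (f : Ω → α) : α → ℝ :=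
  fun a => ∑ ω, if f ω = a then q ω else 0

/-- Entropy (in bits) of a random variable `f` under joint pmf `q`. -/
def HRV2 {Ω α : Type*} [Fintype Ω] [Fintype α] (q : Ω → ℝ) (f : Ω → α) : ℝ :=
  Hent2 (pushf q f)

/-- Mutual information `I(f;g)` in bits under joint pmf `q`. -/
def MIrv2 {Ω α β : Type*} [Fintype Ω] [Fintype α] [Fintype β]
    (q : Ω → ℝ) (f : Ω → α) (g : Ω → β) : ℝ :=
  HRV2 q f + HRV2 q g - HRV2 q (fun ω => (f ω, g ω))

/-- Conditional entropy `H(f | g)` in bits under joint pmf `q`. -/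
def condEntRV2 {Ω α β : Type*} [Fintype Ω] [Fintype α] [Fintype β]
    (q : Ω → ℝ) (f : Ω → α) (g : Ω → β) : ℝ :=
  HRV2 q (fun ω => (f ω, g ω)) - HRV2 q g

/-- Conditional mutual information `I(f ; g | h)` in bits under joint pmf `q`. -/
def condMIrv2 {Ω α β γ : Type*} [Fintype Ω] [Fintype α] [Fintype β] [Fintype γ]
    (q : Ω → ℝ) (f : Ω → α) (g : Ω → β) (h : Ω → γ) : ℝ :=
  condEntRV2 q f h + condEntRV2 q g h - condEntRV2 q (fun ω => (f ω, g ω)) h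

/-- Binary entropy function (in bits). -/
def binH (t : ℝ) : ℝ := -(t * Real.logb 2 t) - ((1 - t) * Real.logb 2 (1 - t))

/-- Joint pmf of `(X1, Y1, X2, Y2)` where `(X1,X2) ~ DSBS(p)`, `Y1 = X1 ⊕ Z1`,
`Y2 = X2 ⊕ Z2`, `Z1, Z2 ~ Ber(p)` with `Z1, Z2` independent of `(X1, X2)` and of each
other. Coordinates: `w = (x1, y1, x2, y2)`. -/
def srcDSBS (p : ℝ) : Bool × Bool × Bool × Bool → ℝ :=
  fun w => (if w.1 = w.2.2.1 then (1 - p) / 2 else p / 2) *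
    (if w.2.1 = w.1 then 1 - p else p) *
    (if w.2.2.2 = w.2.2.1 then 1 - p else p)

/-- Erasure distortion on `X1 = Bool`, with reproduction alphabet
`Option Bool` (`none` is the erasure symbol): `0` for correct reproduction, `1` for an
erasure and `∞` for an error. -/
def dErase : Bool → Option Bool → ℝ≥0∞ :=
  fun x xh => match xh with
    | none => 1
    | some b => if b = x then 0 else ∞

/-- The erasure-type mechanism `P_{U1|X1}` with parameters `α₀, α₁`:
`P(U1 = e | X1 = 0) = α₀`, `P(U1 = 0 | X1 = 0) = 1 - α₀`,
`P(U1 = e | X1 = 1) = α₁`, `P(U1 = 1 | X1 = 1) = 1 - α₁` (the erasure symbol `e` is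
`none`). -/
def κErase (a0 a1 : ℝ) : Bool → Option Bool → ℝ :=
  fun x u => match u with
    | none => if x then a1 else a0
    | some b => if b = x then (if x then 1 - a1 else 1 - a0) else 0

/-- Joint pmf of `(X1, Y1, X2, U1)` for `(X1,X2) ~ DSBS(p)`, `Y1 = X1 ⊕ Z1` with
`Z1 ~ Ber(p)` independent of `X1`, and the erasure-type mechanism with parameters
`(α₀, α₁)` applied to `X1`. -/
def jointErase (p a0 a1 : ℝ) : Bool × Bool × Bool × Option Bool → ℝ :=
  fun w => (if w.1 = w.2.2.1 then (1 - p) / 2 else p / 2) *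
    (if w.2.1 = w.1 then 1 - p else p) * κErase a0 a1 w.1 w.2.2.2

/-- `H(Y1 | U1, X2)` under the erasure-type mechanism with parameters `(α₀, α₁)`. -/
def FErase (p a0 a1 : ℝ) : ℝ :=
  condEntRV2 (jointErase p a0 a1) (fun w => w.2.1) (fun w => (w.2.2.2, w.2.2.1))

/-- The Wyner–Ziv rate objective `I(X1; U1 | X2)`. -/
def WZErase (p a0 a1 : ℝ) : ℝ :=
  condMIrv2 (jointErase p a0 a1) (fun w => w.1) (fun w => w.2.2.2) (fun w => w.2.2.1)

/-- The leakage objective `I(Y1; U1, X2)`. -/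
def LeakErase (p a0 a1 : ℝ) : ℝ :=
  MIrv2 (jointErase p a0 a1) (fun w => w.2.1) (fun w => (w.2.2.2, w.2.2.1))

/-!
Conditional entropy `H(f | g) = ∑_b ∑_a P(b) η(P(a, b) / P(b))` (up to the factor `log 2`) is a
sum of perspectives of the concave function `η = negMulLog`. Perspectives of a concave function
are superadditive and positively homogeneous, so conditional entropy is concave in the joint pmf,
and the finite form of superadditivity (the log-sum inequality, i.e. Jensen for `η`) says that
conditioning on more reduces it.

The joint pmf of `(X1, Y1, X2, U1)` is affine in `(α₀, α₁)`, so `H(f | U1, X2)` is concave on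
`[0,1]²`. Flipping every bit preserves the source and turns the mechanism `(α₀, α₁)` into
`(α₁, α₀)`, so for `f = Y1` or `f = X1` it is symmetric, and concavity puts its maximum on each
line `α₀ + α₁ = const` at the diagonal. Along the diagonal it is concave and largest at total
erasure `α = 1`, where it equals `H(f | X2) ≥ H(f | U1, X2)`; hence it is nondecreasing there.
Since `I(X1; U1 | X2) = H(X1 | X2) - H(X1 | U1, X2)` and `I(Y1; U1, X2) = H(Y1) - H(Y1 | U1, X2)`,
where `H(X1 | X2)` and `H(Y1)` do not depend on the mechanism, the symmetric mechanism with
`α₀ = α₁ = min D1 1` minimizes both.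
-/

open Real

/-- The perspective of `negMulLog`; real division makes it vanish at `v = 0`. -/
def perspNegMulLog (u v : ℝ) : ℝ := v * negMulLog (u / v)

lemma perspNegMulLog_mul_mul (t u v : ℝ) :
    perspNegMulLog (t * u) (t * v) = t * perspNegMulLog u v := by
  rcases eq_or_ne t 0 with rfl | ht
  · simp [perspNegMulLog]
  · rw [perspNegMulLog, perspNegMulLog, mul_div_mul_left _ _ ht, mul_assoc]

lemma negMulLog_add_mul_log_eq_perspNegMulLog {u v : ℝ} (h : v = 0 → u = 0) :
    negMulLog u + u * log v = perspNegMulLog u v := by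
  rcases eq_or_ne u 0 with rfl | hu
  · simp [perspNegMulLog]
  have hv : v ≠ 0 := fun hv => hu (h hv)
  rw [perspNegMulLog, negMulLog, negMulLog, log_div hu hv]
  field_simp
  ring

/-- The log-sum inequality. -/
lemma sum_perspNegMulLog_le {ι : Type*} (s : Finset ι) {u v : ι → ℝ}
    (hu : ∀ i ∈ s, 0 ≤ u i) (huv : ∀ i ∈ s, u i ≤ v i) :
    ∑ i ∈ s, perspNegMulLog (u i) (v i) ≤ perspNegMulLog (∑ i ∈ s, u i) (∑ i ∈ s, v i) := by
  have hv : ∀ i ∈ s, 0 ≤ v i := fun i hi => (hu i hi).trans (huv i hi)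
  set V := ∑ i ∈ s, v i
  rcases (Finset.sum_nonneg hv).eq_or_lt with hV | hV
  · have hv0 : ∀ i ∈ s, v i = 0 := (Finset.sum_eq_zero_iff_of_nonneg hv).1 hV.symm
    rw [Finset.sum_eq_zero fun i hi => by rw [perspNegMulLog, hv0 i hi, zero_mul],
      perspNegMulLog, show V = 0 from hV.symm, zero_mul]
  have hJensen := concaveOn_negMulLog.le_map_sum (t := s) (w := fun i => v i / V)
    (p := fun i => u i / v i) (fun i hi => div_nonneg (hv i hi) hV.le)
    (by rw [← Finset.sum_div, div_self hV.ne']) (fun i hi => div_nonneg (hu i hi) (hv i hi))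
  have hmean : ∑ i ∈ s, v i / V * (u i / v i) = (∑ i ∈ s, u i) / V := by
    rw [Finset.sum_div]
    refine Finset.sum_congr rfl fun i hi => ?_
    rcases (hv i hi).eq_or_lt with hvi | hvi
    · rw [← hvi, le_antisymm (hvi ▸ huv i hi) (hu i hi)]; simp
    · field_simp
  simp only [smul_eq_mul, hmean] at hJensen
  rw [perspNegMulLog, ← div_le_iff₀' hV, Finset.sum_div]
  convert hJensen using 2 with i
  rw [perspNegMulLog]; ring

lemma perspNegMulLog_add_le {u₁ u₂ v₁ v₂ : ℝ} (hu₁ : 0 ≤ u₁) (huv₁ : u₁ ≤ v₁) (hu₂ : 0 ≤ u₂)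
    (huv₂ : u₂ ≤ v₂) :
    perspNegMulLog u₁ v₁ + perspNegMulLog u₂ v₂ ≤ perspNegMulLog (u₁ + u₂) (v₁ + v₂) := by
  simpa using sum_perspNegMulLog_le Finset.univ (u := ![u₁, u₂]) (v := ![v₁, v₂])
    (by simp [Fin.forall_fin_two, hu₁, hu₂]) (by simp [Fin.forall_fin_two, huv₁, huv₂])

section Pushforward

variable {Ω α β γ : Type*} [Fintype Ω]

lemma pushf_nonneg {q : Ω → ℝ} (hq : 0 ≤ q) (f : Ω → α) : 0 ≤ pushf q f := by
  classical
  intro a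
  exact Finset.sum_nonneg fun ω _ => by split_ifs; exacts [hq ω, le_rfl]

lemma pushf_comp [Fintype α] (q : Ω → ℝ) (f : Ω → α) (g : α → β) :
    pushf q (g ∘ f) = pushf (pushf q f) g := by
  classical
  funext b
  simp only [pushf, Function.comp_apply]
  simp_rw [← Finset.sum_filter]
  rw [Finset.sum_comm' (t' := Finset.univ.filter fun ω => g (f ω) = b)
    (s' := fun ω => {f ω})] <;> simp
  exact fun x ω => ⟨fun ⟨hg, hf⟩ => ⟨hf.symm, hf ▸ hg⟩, fun ⟨hf, hg⟩ => ⟨hf ▸ hg, hf.symm⟩⟩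

lemma pushf_smul_add_smul (q₁ q₂ : Ω → ℝ) (a b : ℝ) (f : Ω → α) :
    pushf (a • q₁ + b • q₂) f = a • pushf q₁ f + b • pushf q₂ f := by
  classical
  funext x
  simp only [pushf, Pi.add_apply, Pi.smul_apply, smul_eq_mul, Finset.mul_sum,
    ← Finset.sum_add_distrib]
  exact Finset.sum_congr rfl fun ω _ => by split_ifs <;> simp

lemma pushf_prodMk_snd_eq_sum [Fintype α] [Fintype β] (q : Ω → ℝ) (f : Ω → α) (g : Ω → β) (b : β) :
    pushf q g b = ∑ a, pushf q (fun ω => (f ω, g ω)) (a, b) := by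
  classical
  rw [show g = Prod.snd ∘ fun ω => (f ω, g ω) from rfl, pushf_comp]
  simp [pushf, Fintype.sum_prod_type]

lemma pushf_prodMk_prodMk_eq_sum [Fintype β] (q : Ω → ℝ) (f : Ω → α) (g : Ω → β) (h : Ω → γ)
    (a : α) (c : γ) :
    pushf q (fun ω => (f ω, h ω)) (a, c) = ∑ b, pushf q (fun ω => (f ω, g ω, h ω)) (a, b, c) := by
  classical
  unfold pushf
  rw [Finset.sum_comm]
  refine Finset.sum_congr rfl fun ω _ => ?_
  by_cases hf : f ω = a <;> by_cases hh : h ω = c <;> simp [hf, hh]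

lemma pushf_prodMk_le_pushf [Fintype α] [Fintype β] {q : Ω → ℝ} (hq : 0 ≤ q) (f : Ω → α)
    (g : Ω → β) (a : α) (b : β) :
    pushf q (fun ω => (f ω, g ω)) (a, b) ≤ pushf q g b := by
  rw [pushf_prodMk_snd_eq_sum q f g b]
  exact Finset.single_le_sum (fun a _ => pushf_nonneg hq _ (a, b)) (Finset.mem_univ a)

lemma pushf_apply_of_injective [Fintype α] (r : α → ℝ) {ι : α → β} (hι : ι.Injective) (a : α) :
    pushf r ι (ι a) = r a := by
  classical
  simp [pushf, hι.eq_iff]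

lemma pushf_apply_of_notMem_range [Fintype α] (r : α → ℝ) {ι : α → β} {b : β}
    (hb : b ∉ Set.range ι) :
    pushf r ι b = 0 :=
  Finset.sum_eq_zero fun a _ => if_neg fun h => hb ⟨a, h⟩

end Pushforward

section Entropy

variable {Ω α β γ : Type*} [Fintype Ω] [Fintype α] [Fintype β] [Fintype γ]

lemma Hent2_eq_sum_negMulLog (r : α → ℝ) : Hent2 r = (∑ a, negMulLog (r a)) / log 2 := by
  simp only [Hent2, logb, negMulLog, Finset.sum_div]
  exact Finset.sum_congr rfl fun a _ => by ring

lemma Hent2_pushf_of_injective (r : α → ℝ) {ι : α → β} (hι : ι.Injective) :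
    Hent2 (pushf r ι) = Hent2 r := by
  classical
  rw [Hent2, Hent2, ← Finset.sum_subset (Finset.subset_univ (Finset.univ.image ι)),
    Finset.sum_image fun a _ a' _ h => hι h]
  · simp only [pushf_apply_of_injective r hι]
  · intro b _ hb
    rw [pushf_apply_of_notMem_range r fun ⟨a, ha⟩ => hb (by simp [← ha])]
    simp

lemma HRV2_comp_injective (q : Ω → ℝ) (f : Ω → α) {ι : α → β} (hι : ι.Injective) :
    HRV2 q (ι ∘ f) = HRV2 q f := by
  rw [HRV2, pushf_comp, Hent2_pushf_of_injective _ hι, HRV2]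

lemma HRV2_congr (q : Ω → ℝ) {f f' : Ω → α} (h : ∀ ω, q ω ≠ 0 → f ω = f' ω) :
    HRV2 q f = HRV2 q f' := by
  classical
  rw [HRV2, HRV2]
  congr 1
  funext a
  refine Finset.sum_congr rfl fun ω _ => ?_
  by_cases hq : q ω = 0
  · simp [hq]
  · rw [h ω hq]

lemma HRV2_comp_perm (q : Ω → ℝ) (σ : Equiv.Perm Ω) (f : Ω → α) :
    HRV2 (q ∘ σ) (f ∘ σ) = HRV2 q f := by
  classical
  rw [HRV2, HRV2]
  congr 1
  funext a
  exact Equiv.sum_comp σ fun ω => if f ω = a then q ω else 0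

lemma condEntRV2_eq_sum_perspNegMulLog {q : Ω → ℝ} (hq : 0 ≤ q) (f : Ω → α) (g : Ω → β) :
    condEntRV2 q f g =
      (∑ b, ∑ a, perspNegMulLog (pushf q (fun ω => (f ω, g ω)) (a, b)) (pushf q g b)) /
        log 2 := by
  rw [condEntRV2, HRV2, HRV2, Hent2_eq_sum_negMulLog, Hent2_eq_sum_negMulLog, ← sub_div,
    Fintype.sum_prod_type, Finset.sum_comm, ← Finset.sum_sub_distrib]
  congr 1
  refine Finset.sum_congr rfl fun b _ => ?_
  have hmarg := pushf_prodMk_snd_eq_sum q f g b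
  rw [negMulLog, hmarg, neg_mul, Finset.sum_mul, sub_neg_eq_add, ← Finset.sum_add_distrib, ← hmarg]
  refine Finset.sum_congr rfl fun a _ => negMulLog_add_mul_log_eq_perspNegMulLog fun hb => ?_
  exact le_antisymm (hb ▸ pushf_prodMk_le_pushf hq f g a b) (pushf_nonneg hq _ _)

lemma concaveOn_condEntRV2 (f : Ω → α) (g : Ω → β) :
    ConcaveOn ℝ (Set.Ici 0) fun q : Ω → ℝ => condEntRV2 q f g := by
  refine ⟨convex_Ici 0, fun q₁ hq₁ q₂ hq₂ s t hs ht hst => ?_⟩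
  have hq : 0 ≤ s • q₁ + t • q₂ := add_nonneg (smul_nonneg hs hq₁) (smul_nonneg ht hq₂)
  simp only [smul_eq_mul, condEntRV2_eq_sum_perspNegMulLog hq, condEntRV2_eq_sum_perspNegMulLog
    (Set.mem_Ici.1 hq₁), condEntRV2_eq_sum_perspNegMulLog (Set.mem_Ici.1 hq₂), pushf_smul_add_smul,
    Pi.add_apply, Pi.smul_apply, smul_eq_mul, mul_div_assoc', ← add_div, Finset.mul_sum,
    ← Finset.sum_add_distrib]
  gcongr with b _ a _
  rw [← perspNegMulLog_mul_mul, ← perspNegMulLog_mul_mul]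
  exact perspNegMulLog_add_le (mul_nonneg hs (pushf_nonneg hq₁ _ _))
    (mul_le_mul_of_nonneg_left (pushf_prodMk_le_pushf hq₁ f g a b) hs)
    (mul_nonneg ht (pushf_nonneg hq₂ _ _))
    (mul_le_mul_of_nonneg_left (pushf_prodMk_le_pushf hq₂ f g a b) ht)

lemma condEntRV2_prodMk_le {q : Ω → ℝ} (hq : 0 ≤ q) (f : Ω → α) (g : Ω → β) (h : Ω → γ) :
    condEntRV2 q f (fun ω => (g ω, h ω)) ≤ condEntRV2 q f h := by
  rw [condEntRV2_eq_sum_perspNegMulLog hq, condEntRV2_eq_sum_perspNegMulLog hq,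
    Fintype.sum_prod_type, Finset.sum_comm]
  gcongr with c _
  rw [Finset.sum_comm]
  gcongr with a _
  rw [pushf_prodMk_prodMk_eq_sum q f g h, pushf_prodMk_snd_eq_sum q g h]
  exact sum_perspNegMulLog_le _ (fun b _ => pushf_nonneg hq _ _)
    fun b _ => pushf_prodMk_le_pushf hq f (fun ω => (g ω, h ω)) a (b, c)

lemma condEntRV2_comp_injective (q : Ω → ℝ) (f : Ω → α) (g : Ω → β) {ι : α → α} {κ : β → β}
    (hι : ι.Injective) (hκ : κ.Injective) :
    condEntRV2 q (ι ∘ f) (κ ∘ g) = condEntRV2 q f g := by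
  rw [condEntRV2, condEntRV2, HRV2_comp_injective q g hκ,
    ← HRV2_comp_injective q (fun ω => (f ω, g ω)) (hι.prodMap hκ)]
  rfl

lemma condEntRV2_comp_perm (q : Ω → ℝ) (σ : Equiv.Perm Ω) (f : Ω → α) (g : Ω → β) :
    condEntRV2 (q ∘ σ) (f ∘ σ) (g ∘ σ) = condEntRV2 q f g := by
  rw [condEntRV2, condEntRV2, HRV2_comp_perm, ← HRV2_comp_perm q σ (fun ω => (f ω, g ω))]
  rfl

lemma condEntRV2_prodMk_of_const (q : Ω → ℝ) (f : Ω → α) {g : Ω → β} (h : Ω → γ) {b : β}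
    (hg : ∀ ω, q ω ≠ 0 → g ω = b) :
    condEntRV2 q f (fun ω => (g ω, h ω)) = condEntRV2 q f h := by
  have hfgh : HRV2 q (fun ω => (f ω, g ω, h ω)) = HRV2 q (fun ω => (f ω, h ω)) := by
    rw [HRV2_congr q (f' := (fun x : α × γ => (x.1, b, x.2)) ∘ fun ω => (f ω, h ω))
      fun ω hω => by simp [hg ω hω], HRV2_comp_injective]
    intro x y hxy
    simpa [Prod.ext_iff] using hxy
  have hgh : HRV2 q (fun ω => (g ω, h ω)) = HRV2 q h := by
    rw [HRV2_congr q (f' := Prod.mk b ∘ h) fun ω hω => by simp [hg ω hω],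
      HRV2_comp_injective q h (Prod.mk_right_injective b)]
  rw [condEntRV2, condEntRV2, hfgh, hgh]

lemma MIrv2_eq_HRV2_sub_condEntRV2 (q : Ω → ℝ) (f : Ω → α) (g : Ω → β) :
    MIrv2 q f g = HRV2 q f - condEntRV2 q f g := by
  rw [MIrv2, condEntRV2]
  ring

lemma condMIrv2_eq_condEntRV2_sub_condEntRV2 (q : Ω → ℝ) (f : Ω → α) (g : Ω → β) (h : Ω → γ) :
    condMIrv2 q f g h = condEntRV2 q f h - condEntRV2 q f (fun ω => (g ω, h ω)) := by
  have hassoc : HRV2 q (fun ω => ((f ω, g ω), h ω)) = HRV2 q (fun ω => (f ω, g ω, h ω)) :=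
    (HRV2_comp_injective q (fun ω => ((f ω, g ω), h ω)) (Equiv.prodAssoc α β γ).injective).symm
  rw [condMIrv2, condEntRV2, condEntRV2, condEntRV2, condEntRV2, hassoc]
  ring

end Entropy

lemma ConcaveOn.monotoneOn_of_isMaxOn_right {φ : ℝ → ℝ} {a b : ℝ} (hφ : ConcaveOn ℝ (Set.Icc a b) φ)
    (hb : IsMaxOn φ (Set.Icc a b) b) : MonotoneOn φ (Set.Icc a b) := by
  intro x hx y hy hxy
  rcases hy.2.eq_or_lt with rfl | hyb
  · exact hb hx
  · exact hφ.left_le_of_le_right'' hx ⟨hy.1.trans hyb.le, le_rfl⟩ hxy hyb (hb hy)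

lemma ConcaveOn.le_map_midpoint_of_swap {s : Set (ℝ × ℝ)} {φ : ℝ × ℝ → ℝ} (hφ : ConcaveOn ℝ s φ)
    (hs : ∀ x ∈ s, x.swap ∈ s) (hφs : ∀ x, φ x.swap = φ x) {x : ℝ × ℝ} (hx : x ∈ s) :
    φ x ≤ φ ((x.1 + x.2) / 2, (x.1 + x.2) / 2) := by
  have hmid : (1 / 2 : ℝ) • x + (1 / 2 : ℝ) • x.swap = ((x.1 + x.2) / 2, (x.1 + x.2) / 2) := by
    ext <;> simp <;> ring
  have := hφ.2 hx (hs x hx) (show (0 : ℝ) ≤ 1 / 2 by norm_num) (show (0 : ℝ) ≤ 1 / 2 by norm_num)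
    (by norm_num)
  rw [hmid, hφs, smul_eq_mul] at this
  linarith

/-- Sample space of `(X1, Y1, X2, U1)`. -/
abbrev ΩErase := Bool × Bool × Bool × Option Bool

/-- `H(f | U1, X2)` under the erasure mechanism with parameters `a = (α₀, α₁)`. -/
def condEntErase {α : Type*} [Fintype α] (p : ℝ) (f : ΩErase → α) (a : ℝ × ℝ) : ℝ :=
  condEntRV2 (jointErase p a.1 a.2) f fun w => (w.2.2.2, w.2.2.1)

section ErasureMechanism

variable {p : ℝ} {α β : Type*} [Fintype α] [Fintype β]

lemma κErase_nonneg {a₀ a₁ : ℝ} (ha₀ : a₀ ∈ Set.Icc (0 : ℝ) 1) (ha₁ : a₁ ∈ Set.Icc (0 : ℝ) 1)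
    (x : Bool) (u : Option Bool) : 0 ≤ κErase a₀ a₁ x u := by
  obtain ⟨_, _⟩ := ha₀
  obtain ⟨_, _⟩ := ha₁
  rcases u with _ | b <;> cases x <;> simp only [κErase] <;> split_ifs <;> linarith

lemma jointErase_nonneg (hp₀ : 0 ≤ p) (hp₁ : p ≤ 1) {a : ℝ × ℝ} (ha : a ∈ Set.Icc 0 1) :
    0 ≤ jointErase p a.1 a.2 := fun w =>
  mul_nonneg (mul_nonneg (by split_ifs <;> linarith) (by split_ifs <;> linarith))
    (κErase_nonneg ⟨ha.1.1, ha.2.1⟩ ⟨ha.1.2, ha.2.2⟩ _ _)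

lemma jointErase_add {s t : ℝ} (hst : s + t = 1) (x₀ x₁ y₀ y₁ : ℝ) :
    jointErase p (s * x₀ + t * y₀) (s * x₁ + t * y₁) =
      s • jointErase p x₀ x₁ + t • jointErase p y₀ y₁ := by
  obtain rfl : t = 1 - s := by linarith
  funext ⟨x, y, z, u⟩
  rcases u with _ | b <;> cases x <;> simp only [jointErase, κErase, Pi.add_apply, Pi.smul_apply,
    smul_eq_mul] <;> split_ifs <;> ring

lemma concaveOn_condEntErase (hp₀ : 0 ≤ p) (hp₁ : p ≤ 1) (f : ΩErase → α) :
    ConcaveOn ℝ (Set.Icc 0 1) (condEntErase p f) := by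
  refine ⟨convex_Icc 0 1, fun a ha b hb s t hs ht hst => ?_⟩
  have := (concaveOn_condEntRV2 f fun w => (w.2.2.2, w.2.2.1)).2
    (jointErase_nonneg hp₀ hp₁ ha) (jointErase_nonneg hp₀ hp₁ hb) hs ht hst
  rwa [← jointErase_add hst] at this

def flipErase : Equiv.Perm ΩErase :=
  Equiv.boolNot.prodCongr (Equiv.boolNot.prodCongr (Equiv.boolNot.prodCongr
    Equiv.boolNot.optionCongr))

lemma jointErase_comp_flipErase (a₀ a₁ : ℝ) :
    jointErase p a₀ a₁ ∘ flipErase = jointErase p a₁ a₀ := by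
  funext ⟨x, y, z, u⟩
  rcases u with _ | b <;> cases x <;> cases y <;> cases z <;> try cases b
  all_goals simp [jointErase, κErase, flipErase, Equiv.boolNot]

lemma condEntErase_swap {f : ΩErase → Bool} (hf : ∀ w, f (flipErase w) = !f w) (a : ℝ × ℝ) :
    condEntErase p f a.swap = condEntErase p f a := by
  set g : ΩErase → Option Bool × Bool := fun w => (w.2.2.2, w.2.2.1)
  have hf' : f = not ∘ (f ∘ flipErase) := funext fun w => by simp [hf]
  have hg' : g = Prod.map (Option.map not) not ∘ (g ∘ flipErase) := by
    funext ⟨x, y, z, u⟩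
    cases u <;> simp [g, flipErase, Equiv.boolNot]
  calc condEntErase p f a.swap
      = condEntRV2 (jointErase p a.1 a.2 ∘ flipErase) (not ∘ (f ∘ flipErase))
          (Prod.map (Option.map not) not ∘ (g ∘ flipErase)) := by
        rw [← hf', ← hg', jointErase_comp_flipErase]; rfl
    _ = condEntErase p f a := by
        rw [condEntRV2_comp_injective _ _ _ Bool.not_injective
          ((Option.map_injective Bool.not_injective).prodMap Bool.not_injective),
          condEntRV2_comp_perm]
        rfl

lemma pushf_jointErase_forgetU (a₀ a₁ : ℝ) :
    pushf (jointErase p a₀ a₁) (fun w => (w.1, w.2.1, w.2.2.1)) = fun x =>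
      (if x.1 = x.2.2 then (1 - p) / 2 else p / 2) * (if x.2.1 = x.1 then 1 - p else p) := by
  funext ⟨x, y, z⟩
  cases x <;> cases y <;> cases z <;>
    simp [pushf, Fintype.sum_prod_type, jointErase, κErase] <;> ring

lemma HRV2_jointErase_eq {h : ΩErase → β} (hh : ∀ w u, h (w.1, w.2.1, w.2.2.1, u) = h w)
    (a₀ a₁ b₀ b₁ : ℝ) : HRV2 (jointErase p a₀ a₁) h = HRV2 (jointErase p b₀ b₁) h := by
  have hcomp : h = (fun x => h (x.1, x.2.1, x.2.2, none)) ∘ fun w => (w.1, w.2.1, w.2.2.1) :=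
    funext fun w => (hh w none).symm
  rw [HRV2, HRV2, hcomp, pushf_comp, pushf_comp, pushf_jointErase_forgetU,
    pushf_jointErase_forgetU]

lemma condEntRV2_jointErase_X2_eq {f : ΩErase → α} (hf : ∀ w u, f (w.1, w.2.1, w.2.2.1, u) = f w)
    (a₀ a₁ b₀ b₁ : ℝ) :
    condEntRV2 (jointErase p a₀ a₁) f (fun w => w.2.2.1) =
      condEntRV2 (jointErase p b₀ b₁) f (fun w => w.2.2.1) := by
  rw [condEntRV2, condEntRV2, HRV2_jointErase_eq (h := fun w => (f w, w.2.2.1))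
    (fun w u => by rw [hf]) a₀ a₁ b₀ b₁, HRV2_jointErase_eq (h := fun w => w.2.2.1)
    (fun _ _ => rfl) a₀ a₁ b₀ b₁]

lemma eq_none_of_jointErase_one_one_ne_zero {w : ΩErase} (hw : jointErase p 1 1 w ≠ 0) :
    w.2.2.2 = none := by
  obtain ⟨x, y, z, _ | b⟩ := w
  · rfl
  · refine absurd ?_ hw
    cases x <;> simp [jointErase, κErase]

lemma condEntErase_le_one (hp₀ : 0 ≤ p) (hp₁ : p ≤ 1) {f : ΩErase → α}
    (hf : ∀ w u, f (w.1, w.2.1, w.2.2.1, u) = f w) {a : ℝ × ℝ} (ha : a ∈ Set.Icc 0 1) :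
    condEntErase p f a ≤ condEntErase p f 1 :=
  calc condEntErase p f a
      ≤ condEntRV2 (jointErase p a.1 a.2) f (fun w => w.2.2.1) :=
        condEntRV2_prodMk_le (jointErase_nonneg hp₀ hp₁ ha) _ _ _
    _ = condEntRV2 (jointErase p 1 1) f (fun w => w.2.2.1) :=
        condEntRV2_jointErase_X2_eq hf _ _ _ _
    _ = condEntErase p f 1 :=
        (condEntRV2_prodMk_of_const _ _ _ fun _ => eq_none_of_jointErase_one_one_ne_zero).symm

lemma condEntErase_le_diag (hp₀ : 0 ≤ p) (hp₁ : p ≤ 1) {f : ΩErase → Bool}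
    (hf : ∀ w u, f (w.1, w.2.1, w.2.2.1, u) = f w) (hflip : ∀ w, f (flipErase w) = !f w)
    {b : ℝ × ℝ} (hb : b ∈ Set.Icc 0 1) {a : ℝ} (hba : (b.1 + b.2) / 2 ≤ a) (ha : a ≤ 1) :
    condEntErase p f b ≤ condEntErase p f (a, a) := by
  have hconc := concaveOn_condEntErase hp₀ hp₁ f
  have hdiag : ConcaveOn ℝ (Set.Icc 0 1) fun t => condEntErase p f (t, t) :=
    (hconc.comp_linearMap (LinearMap.id.prod LinearMap.id)).subset
      (fun t ht => ⟨⟨ht.1, ht.1⟩, ⟨ht.2, ht.2⟩⟩) (convex_Icc 0 1)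
  have hmono := hdiag.monotoneOn_of_isMaxOn_right fun t ht =>
    condEntErase_le_one hp₀ hp₁ hf ⟨⟨ht.1, ht.1⟩, ⟨ht.2, ht.2⟩⟩
  have hb₀ : 0 ≤ b.1 := hb.1.1
  have hb₁ : 0 ≤ b.2 := hb.1.2
  have hmid₀ : 0 ≤ (b.1 + b.2) / 2 := by positivity
  calc condEntErase p f b
      ≤ condEntErase p f ((b.1 + b.2) / 2, (b.1 + b.2) / 2) :=
        hconc.le_map_midpoint_of_swap (fun x hx => ⟨hx.1.symm, hx.2.symm⟩)
          (condEntErase_swap hflip) hb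
    _ ≤ condEntErase p f (a, a) :=
        hmono ⟨hmid₀, hba.trans ha⟩ ⟨hmid₀.trans hba, ha⟩ hba

end ErasureMechanism

/-- **Symmetric erasure mechanism is optimal.**  For `(X1,X2) ~ DSBS(p)` (so `X1` is
uniform) and `Y1 = X1 ⊕ Z1`, `Z1 ~ Ber(p)` independent of `X1`, over erasure-type
mechanisms with parameters `(α₀, α₁) ∈ [0,1]²` subject to `(α₀ + α₁)/2 ≤ D1`:
`H(Y1 | U1, X2)` is concave and symmetric in `(α₀, α₁)` and is maximized subject to the
constraint at `α₀ = α₁`; consequently a single conditional distribution `P_{U1|X1}`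
simultaneously minimizes the Wyner–Ziv rate `I(X1; U1 | X2)` and the leakage
`I(Y1; U1, X2)` over the feasible set. -/
theorem symmetric_erasure_mechanism_optimal
    (p D1 : ℝ) (hp0 : 0 < p) (hp1 : p < 1) (hD : 0 ≤ D1) :
    -- concavity of (α₀, α₁) ↦ H(Y1 | U1, X2) on [0,1]²
    (∀ a b : ℝ × ℝ, a ∈ Set.Icc (0,0) ((1:ℝ),(1:ℝ)) → b ∈ Set.Icc (0,0) ((1:ℝ),(1:ℝ)) →
      ∀ t : ℝ, 0 ≤ t → t ≤ 1 →
        t * FErase p a.1 a.2 + (1 - t) * FErase p b.1 b.2 ≤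
          FErase p (t * a.1 + (1 - t) * b.1) (t * a.2 + (1 - t) * b.2)) ∧
    -- symmetry under swapping α₀ and α₁
    (∀ a0 a1 : ℝ, a0 ∈ Set.Icc (0:ℝ) 1 → a1 ∈ Set.Icc (0:ℝ) 1 →
      FErase p a0 a1 = FErase p a1 a0) ∧
    -- subject to (α₀+α₁)/2 ≤ D1, the maximum is attained on the diagonal
    (∀ a0 a1 : ℝ, a0 ∈ Set.Icc (0:ℝ) 1 → a1 ∈ Set.Icc (0:ℝ) 1 → (a0 + a1) / 2 ≤ D1 →
      FErase p a0 a1 ≤ FErase p ((a0 + a1) / 2) ((a0 + a1) / 2)) ∧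
    -- consequently, one distribution minimizes both the Wyner–Ziv rate and the leakage
    (∃ a : ℝ, a ∈ Set.Icc (0:ℝ) 1 ∧ (a + a) / 2 ≤ D1 ∧
      ∀ b0 b1 : ℝ, b0 ∈ Set.Icc (0:ℝ) 1 → b1 ∈ Set.Icc (0:ℝ) 1 → (b0 + b1) / 2 ≤ D1 →
        WZErase p a a ≤ WZErase p b0 b1 ∧ LeakErase p a a ≤ LeakErase p b0 b1) := by
  have hF := concaveOn_condEntErase hp0.le hp1.le fun w => w.2.1
  have hswap : ∀ a : ℝ × ℝ, FErase p a.2 a.1 = FErase p a.1 a.2 := condEntErase_swap fun _ => rfl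
  refine ⟨?_, ?_, ?_, ?_⟩
  · intro a b ha hb t ht0 ht1
    exact hF.2 ha hb ht0 (by linarith) (by ring)
  · exact fun a0 a1 _ _ => (hswap (a0, a1)).symm
  · exact fun a0 a1 h0 h1 _ => hF.le_map_midpoint_of_swap (fun x hx => ⟨hx.1.symm, hx.2.symm⟩)
      hswap (x := (a0, a1)) ⟨⟨h0.1, h1.1⟩, ⟨h0.2, h1.2⟩⟩
  refine ⟨min D1 1, ⟨le_min hD zero_le_one, min_le_right D1 1⟩, by simp, fun b0 b1 h0 h1 hbD => ?_⟩
  have hb : ((b0, b1) : ℝ × ℝ) ∈ Set.Icc 0 1 := ⟨⟨h0.1, h1.1⟩, ⟨h0.2, h1.2⟩⟩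
  have hba : (b0 + b1) / 2 ≤ min D1 1 := le_min hbD (by linarith [h0.2, h1.2])
  rw [WZErase, WZErase, condMIrv2_eq_condEntRV2_sub_condEntRV2,
    condMIrv2_eq_condEntRV2_sub_condEntRV2, condEntRV2_jointErase_X2_eq (fun _ _ => rfl) _ _ b0 b1,
    LeakErase, LeakErase, MIrv2_eq_HRV2_sub_condEntRV2, MIrv2_eq_HRV2_sub_condEntRV2,
    HRV2_jointErase_eq (fun _ _ => rfl) _ _ b0 b1]
  exact ⟨sub_le_sub_left (condEntErase_le_diag hp0.le hp1.le (f := fun w => w.1) (fun _ _ => rfl)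
      (fun _ => rfl) hb hba (min_le_right D1 1)) _,
    sub_le_sub_left (condEntErase_le_diag hp0.le hp1.le (f := fun w => w.2.1) (fun _ _ => rfl)
      (fun _ => rfl) hb hba (min_le_right D1 1)) _⟩
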